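/- Let F : [0,T] → ℝ^{d×d} be a bounded controlled path w.r.t. a geometric rough path 𝛈 ∈ 𝒞^{0,α}_g, and let A be the solution of the linear rough differential equation dA_t = F_t A_t d𝛈_t, A_0 = I, and A^{-1} the solution of dY_t = −Y_t F_t d𝛈_t, Y_0 = I. Then A_t is invertible for every t ∈ [0,T] with inverse A^{-1}_t, i.e. A^{-1}_t A_t = I for all t, almost surely. -/

import Mathlib

open Set

theorem eq_of_hasDerivWithinAt_zero_Icc {E : Type*} [NormedAddCommGroup E] [NormedSpace ℝ E]
    {f : ℝ → E} {a b : ℝ} (hf : ∀ t ∈ Icc a b, HasDerivWithinAt f 0 (Icc a b) t) :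
    ∀ t ∈ Icc a b, f t = f a := by
  refine constant_of_has_deriv_right_zero (fun t ht => (hf t ht).continuousWithinAt) ?_
  intro t ht
  have hIcc : Icc a b ∈ nhdsWithin t (Ici t) :=
    Filter.mem_of_superset (Icc_mem_nhdsGE ht.2) (Icc_subset_Icc_left ht.1)
  exact (hf t (Ico_subset_Icc_self ht)).mono_of_mem_nhdsWithin hIcc

theorem HasDerivWithinAt.mul_zero_of_inverse_linear {M : Type*} [NormedRing M] [NormedAlgebra ℝ M]
    {A Y : ℝ → M} {B : M} {s : Set ℝ} {t : ℝ}
    (hA : HasDerivWithinAt A (B * A t) s t) (hY : HasDerivWithinAt Y (-(Y t * B)) s t) :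
    HasDerivWithinAt (fun r => Y r * A r) 0 s t := by
  have h := hY.mul hA
  rwa [neg_mul, mul_assoc, neg_add_cancel] at h

theorem stmt_12_general {M : Type*} [NormedRing M] [NormedAlgebra ℝ M]
    (T : ℝ) (F : ℝ → M) (η : ℝ → ℝ)
    (A Y : ℝ → M)
    (hA : ∀ t ∈ Set.Icc (0 : ℝ) T,
      HasDerivWithinAt A (deriv η t • (F t * A t)) (Set.Icc 0 T) t)
    (hY : ∀ t ∈ Set.Icc (0 : ℝ) T,
      HasDerivWithinAt Y (-(deriv η t • (Y t * F t))) (Set.Icc 0 T) t)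
    (hA0 : A 0 = 1) (hY0 : Y 0 = 1) :
    ∀ t ∈ Set.Icc (0 : ℝ) T, Y t * A t = 1 := by
  have hYA : ∀ t ∈ Icc (0 : ℝ) T, HasDerivWithinAt (fun r => Y r * A r) 0 (Icc 0 T) t := by
    intro t ht
    refine HasDerivWithinAt.mul_zero_of_inverse_linear (B := deriv η t • F t) ?_ ?_
    · simpa only [smul_mul_assoc] using hA t ht
    · simpa only [mul_smul_comm] using hY t ht
  intro t ht
  rw [eq_of_hasDerivWithinAt_zero_Icc hYA t ht, hY0, hA0, one_mul]

/-- Invertibility of the solution of the linear (rough) differential equation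
`dA = F A dη`, `A_0 = I`: if `Y` solves the companion equation `dY = −Y F dη`, `Y_0 = I`
(deterministic Riemann–Stieltjes version with `η` differentiable, in a normed algebra),
then `Y_t A_t = I` for all `t ∈ [0,T]`. -/
theorem stmt_12 {M : Type*} [NormedRing M] [NormedAlgebra ℝ M] [CompleteSpace M]
    (T : ℝ) (hT : 0 < T) (F : ℝ → M) (η : ℝ → ℝ) (hη : ContDiff ℝ 1 η)
    (hF : Continuous F)
    (A Y : ℝ → M)
    (hA : ∀ t ∈ Set.Icc (0 : ℝ) T,
      HasDerivWithinAt A (deriv η t • (F t * A t)) (Set.Icc 0 T) t)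
    (hY : ∀ t ∈ Set.Icc (0 : ℝ) T,
      HasDerivWithinAt Y (-(deriv η t • (Y t * F t))) (Set.Icc 0 T) t)
    (hA0 : A 0 = 1) (hY0 : Y 0 = 1) :
    ∀ t ∈ Set.Icc (0 : ℝ) T, Y t * A t = 1 :=
  stmt_12_general T F η A Y hA hY hA0 hY0
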